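/- For every integer k ≥ 1 there exist polynomials e_{k,0}, …, e_{k,k−1} ∈ ℤ[t], each of degree at most k − 1, with e_{k,k−1}(t) = (2k−3)!! · t^{k−1} (where (2k−3)!! = (2k−2)!/(2^{k−1}·(k−1)!), and (−1)!! = 1), such that for every integer ν ≥ 2 the following identity holds in ℚ⟦x⟧: ( (−1)^{k−1}·(k−1)! + x^{k}·D^{k−1}( D(q)·q⁻¹ ) ) · (ν − (ν−1)·q)^{2k−1} = Σ_{ℓ=0}^{k−1} (−1)^{k−ℓ+1} · e_{k,ℓ}(ν) · (ν − (ν−1)·q)^{k−1−ℓ}. (The left-hand side is x^k·∂_x^{k}(log w)·(ν−(ν−1)q)^{2k−1}, since ∂_x(log w) = 1/x + q′/q; for k = 1 the identity reads x·w′/w = (ν − (ν−1)q)⁻¹.) -/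

import Mathlib

/-!
Put `u = ν - (ν - 1) q` and `L = q'/q`. Differentiating `q = 1 + c x^(ν-1) q^ν` gives
`x q' u = (ν - 1) q (q - 1)`, hence `x L u = 1 - u` and `x u' u = -(u - 1)(u - ν)`.
The series `G n = (-1)^n n! + x^(n+1) D^n L` satisfy `x G n' = G (n+1) + (n+1) G n`, so by
induction `G n u^(2n+1) = P n (u)`, where `P 0 = 1` and
`P (n+1) = -(U - 1)(U - ν)(U P n' - (2n+1) P n) - (n+1) U² P n` (`logDerivPoly`).
Taking `ν` to be an indeterminate, `e_{k,ℓ}` is the signed coefficient of `U^(k-1-ℓ)` in `P (k-1)`.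
Only the factor `U - ν` involves `ν`, which bounds the degrees in `ν`; the constant coefficient is
multiplied by `(2n+1) ν` at each step.
-/

open PowerSeries

/-- The formal derivative `d/dx` on `ℚ⟦x⟧`. -/
noncomputable def D : PowerSeries ℚ → PowerSeries ℚ := PowerSeries.derivativeFun

open scoped Nat

namespace Polynomial

variable {R S : Type*} [CommRing R] [CommRing S]

noncomputable def logDerivPoly (s : R) : ℕ → R[X]
  | 0 => 1
  | n + 1 => -(X - 1) * (X - C s) *
        (X * derivative (logDerivPoly s n) - (2 * n + 1 : R[X]) * logDerivPoly s n) -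
      (n + 1 : R[X]) * X ^ 2 * logDerivPoly s n

theorem map_logDerivPoly (f : R →+* S) (s : R) (n : ℕ) :
    (logDerivPoly s n).map f = logDerivPoly (f s) n := by
  induction n with
  | zero => simp [logDerivPoly]
  | succ n ih => simp [logDerivPoly, Polynomial.map_sub, ← derivative_map, ih]

theorem coeff_zero_logDerivPoly (s : R) (n : ℕ) :
    (logDerivPoly s n).coeff 0 = (2 * n - 1)‼ * s ^ n := by
  induction n with
  | zero => simp [logDerivPoly]
  | succ n ih =>
    rw [show 2 * (n + 1) - 1 = 2 * n + 1 by omega, Nat.doubleFactorial_add_one]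
    simp [logDerivPoly, mul_coeff_zero, ih]
    ring

theorem coeff_X_mul_derivative (p : R[X]) (j : ℕ) :
    (X * derivative p).coeff j = j * p.coeff j := by
  cases j with
  | zero => simp
  | succ j => rw [coeff_X_mul, coeff_derivative]; push_cast; ring

theorem natDegree_X_mul_derivative_le (p : R[X]) :
    (X * derivative p).natDegree ≤ p.natDegree := by
  rw [natDegree_le_iff_coeff_eq_zero]
  intro j hj
  rw [coeff_X_mul_derivative, coeff_eq_zero_of_natDegree_lt hj, mul_zero]

theorem natDegree_X_pow_two_mul_X_mul_derivative_sub_le {p : R[X]} {n : ℕ}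
    (hp : p.natDegree ≤ n) :
    (X ^ 2 * (X * derivative p - (n : R[X]) * p)).natDegree ≤ n + 1 := by
  rw [natDegree_le_iff_coeff_eq_zero]
  intro N hN
  obtain ⟨j, rfl⟩ : ∃ j, N = j + 2 := ⟨N - 2, by omega⟩
  rw [coeff_X_pow_mul, coeff_sub, coeff_X_mul_derivative, ← C_eq_natCast, coeff_C_mul]
  rcases (show n ≤ j by omega).eq_or_lt with rfl | hj
  · ring
  · rw [coeff_eq_zero_of_natDegree_lt (hp.trans_lt hj)]; ring

theorem natDegree_logDerivPoly_le (s : R) (n : ℕ) : (logDerivPoly s n).natDegree ≤ n := by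
  induction n with
  | zero => simp [logDerivPoly]
  | succ n ih =>
    set p := logDerivPoly s n
    -- the terms of degree `n + 2` cancel
    have hrec : logDerivPoly s (n + 1) = (C (s + 1) * X + C (-s)) *
        (X * derivative p - (2 * n + 1 : R[X]) * p) -
        X ^ 2 * (X * derivative p - (n : R[X]) * p) := by
      rw [logDerivPoly, C_add, C_neg, C_1]; ring
    have hA : (X * derivative p - (2 * n + 1 : R[X]) * p).natDegree ≤ n := by
      have hc : (2 * n + 1 : R[X]).natDegree = 0 := by
        exact_mod_cast natDegree_natCast (2 * n + 1)
      refine (natDegree_sub_le _ _).trans (max_le ?_ ?_)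
      · exact (natDegree_X_mul_derivative_le p).trans ih
      · exact natDegree_mul_le_of_le hc.le ih |>.trans (by omega)
    rw [hrec]
    exact (natDegree_sub_le _ _).trans
      (max_le (natDegree_mul_le_of_le natDegree_linear_le hA |>.trans (by omega))
        (natDegree_X_pow_two_mul_X_mul_derivative_sub_le ih))

section InnerDegree

variable {p q : R[X][X]} {a b : ℕ}

theorem natDegree_coeff_map_C (f : R[X]) (i : ℕ) : ((f.map C).coeff i).natDegree = 0 := by
  rw [coeff_map]
  exact natDegree_C _

theorem natDegree_coeff_mul_le (hp : ∀ i, (p.coeff i).natDegree ≤ a)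
    (hq : ∀ i, (q.coeff i).natDegree ≤ b) (i : ℕ) : ((p * q).coeff i).natDegree ≤ a + b := by
  rw [coeff_mul]
  exact natDegree_sum_le_of_forall_le _ _ fun x _ => natDegree_mul_le_of_le (hp _) (hq _)

theorem natDegree_coeff_sub_le (hp : ∀ i, (p.coeff i).natDegree ≤ a)
    (hq : ∀ i, (q.coeff i).natDegree ≤ a) (i : ℕ) : ((p - q).coeff i).natDegree ≤ a := by
  rw [coeff_sub]
  exact (natDegree_sub_le _ _).trans (max_le (hp i) (hq i))

theorem natDegree_coeff_derivative_le (hp : ∀ i, (p.coeff i).natDegree ≤ a) (i : ℕ) :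
    ((derivative p).coeff i).natDegree ≤ a := by
  rw [coeff_derivative]
  exact (natDegree_mul_le_of_le (hp _) (by exact_mod_cast (natDegree_natCast (i + 1)).le)).trans_eq
    (add_zero a)

end InnerDegree

theorem natDegree_coeff_logDerivPoly_X_le (n i : ℕ) :
    ((logDerivPoly (X : R[X]) n).coeff i).natDegree ≤ n := by
  induction n generalizing i with
  | zero => simpa [logDerivPoly] using (natDegree_coeff_map_C (1 : R[X]) i).le
  | succ n ih =>
    set p := logDerivPoly (X : R[X]) n
    have hrec : logDerivPoly X (n + 1) =
        (-(X - 1) : R[X]).map C * (X - C X) *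
          ((X : R[X]).map C * derivative p - (2 * n + 1 : R[X]).map C * p) -
        ((n + 1 : R[X]) * X ^ 2).map C * p := by
      simp [logDerivPoly, p]
    have hconst (f : R[X]) (i : ℕ) : ((f.map C).coeff i).natDegree ≤ 0 :=
      (natDegree_coeff_map_C f i).le
    have hlin (i : ℕ) : ((X - C X : R[X][X]).coeff i).natDegree ≤ 1 := by
      rw [coeff_sub, coeff_X, coeff_C]
      split_ifs <;> first | omega | compute_degree!
    have hA (i : ℕ) : (((X : R[X]).map C * derivative p -
        (2 * n + 1 : R[X]).map C * p).coeff i).natDegree ≤ n := natDegree_coeff_sub_le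
      (fun i => (natDegree_coeff_mul_le (hconst _) (natDegree_coeff_derivative_le ih) i).trans_eq
        (zero_add n))
      (fun i => (natDegree_coeff_mul_le (hconst _) ih i).trans_eq (zero_add n)) i
    rw [hrec]
    exact natDegree_coeff_sub_le
      (fun i => (natDegree_coeff_mul_le (natDegree_coeff_mul_le (hconst _) hlin) hA i).trans
        (by omega))
      (fun i => (natDegree_coeff_mul_le (hconst _) ih i).trans (by omega)) i

theorem aeval_map_eq_sum_range {K : Type*} [CommRing K] {p : R[X]} {n : ℕ}
    (hp : p.natDegree ≤ n) (f : R →+* K) (u : K⟦X⟧) :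
    aeval u (p.map f) =
      ∑ ℓ ∈ Finset.range (n + 1), PowerSeries.C (f (p.coeff (n - ℓ))) * u ^ (n - ℓ) := by
  rw [aeval_eq_sum_range' (natDegree_map_le.trans_lt (Nat.lt_succ_of_le hp)),
    ← Finset.sum_range_reflect]
  refine Finset.sum_congr rfl fun ℓ _ => ?_
  rw [coeff_map, Algebra.smul_def, PowerSeries.algebraMap_apply, Nat.succ_sub_one]
  rfl

end Polynomial

namespace Derivation

open Polynomial

variable {R A : Type*} [CommRing R] [CommRing A] [Algebra R A] (d : Derivation R A A) {x : A}

theorem mul_apply_neg_one_pow_mul_factorial_add (hx : d x = 1) (L : A) (n : ℕ) :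
    x * d (((-1) ^ n * n ! : A) + x ^ (n + 1) * d^[n] L) =
      ((-1) ^ (n + 1) * (n + 1)! + x ^ (n + 2) * d^[n + 1] L) +
        (n + 1) * ((-1) ^ n * n ! + x ^ (n + 1) * d^[n] L) := by
  have hconst : d ((-1) ^ n * n ! : A) = 0 := by exact_mod_cast d.map_intCast ((-1) ^ n * n !)
  rw [map_add, hconst, leibniz, leibniz_pow, hx, Function.iterate_succ_apply', Nat.factorial_succ]
  simp only [smul_eq_mul, nsmul_eq_mul, Nat.add_sub_cancel]
  push_cast
  ring

theorem mul_pow_eq_aeval_logDerivPoly (hx : d x = 1) {u L : A} {s : R}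
    (hL : x * L * u = 1 - u) (hu : x * d u * u = -(u - 1) * (u - algebraMap R A s)) (n : ℕ) :
    (((-1) ^ n * n ! : A) + x ^ (n + 1) * d^[n] L) * u ^ (2 * n + 1) =
      aeval u (logDerivPoly s n) := by
  induction n with
  | zero =>
    simp only [logDerivPoly, map_one, Function.iterate_zero_apply]
    linear_combination hL
  | succ n ih =>
    set G := ((-1) ^ n * n ! : A) + x ^ (n + 1) * d^[n] L
    set P := logDerivPoly s n
    have hd := congrArg d ih
    rw [leibniz, leibniz_pow, map_aeval, Nat.add_sub_cancel] at hd
    simp only [smul_eq_mul, nsmul_eq_mul] at hd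
    push_cast at hd
    simp only [logDerivPoly, map_sub, map_mul, map_neg, map_add, map_one, map_pow, aeval_natCast,
      map_ofNat, aeval_X, aeval_C]
    linear_combination (-u ^ (2 * n + 3)) * d.mul_apply_neg_one_pow_mul_factorial_add hx L n +
      (x * u ^ 2) * hd +
      (u * aeval u (derivative P) - (2 * n + 1) * G * u ^ (2 * n + 1)) * hu +
      (-(2 * n + 1) * (-(u - 1) * (u - algebraMap R A s)) - (n + 1) * u ^ 2) * ih

section AlgebraicEquation

variable {c q : A} {m : ℕ}

theorem mul_apply_mul_eq_of_eq_one_add (hx : d x = 1) (hc : d c = 0)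
    (hq : q = 1 + c * x ^ m * q ^ (m + 1)) :
    x * d q * ((m + 1) - m * q) = m * q * (q - 1) := by
  have hxm : x * d (x ^ m) = m * x ^ m := by
    cases m with
    | zero => simp
    | succ m => simp [leibniz_pow, hx]; ring
  have hd := congrArg d hq
  simp only [map_add, map_one_eq_zero, leibniz, d.leibniz_pow (a := q), hc, smul_eq_mul,
    nsmul_eq_mul, Nat.add_sub_cancel] at hd
  push_cast at hd
  linear_combination (x * q) * hd + (c * q ^ (m + 2)) * hxm - ((m + 1) * x * d q + m * q) * hq

theorem mul_pow_eq_aeval_logDerivPoly_of_eq_one_add (hx : d x = 1) (hc : d c = 0)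
    (hq : q = 1 + c * x ^ m * q ^ (m + 1)) {r : A} (hqr : q * r = 1) (n : ℕ) :
    (((-1) ^ n * n ! : A) + x ^ (n + 1) * d^[n] (d q * r)) * ((m + 1) - m * q) ^ (2 * n + 1) =
      aeval ((m + 1) - m * q : A) (logDerivPoly (m + 1 : R) n) := by
  have h := d.mul_apply_mul_eq_of_eq_one_add hx hc hq
  refine d.mul_pow_eq_aeval_logDerivPoly hx ?_ ?_ n
  · linear_combination r * h + m * (q - 1) * hqr
  · simp only [map_sub, map_add, map_natCast, _root_.map_natCast, map_one, map_one_eq_zero,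
      leibniz, smul_eq_mul]
    linear_combination (-(m : A)) * h

end AlgebraicEquation

end Derivation

namespace PowerSeries

theorem eq_one_add_of_X_mul_eq {R : Type*} [CommRing R] {c : R} {q w : R⟦X⟧} {m : ℕ}
    (hx : X = w - C c * w ^ (m + 1)) (hqw : X * q = w) : q = 1 + C c * X ^ m * q ^ (m + 1) := by
  apply X_mul_cancel
  rw [← hqw, mul_pow] at hx
  linear_combination -hx

theorem iterate_logDeriv_mul_pow_eq_sum {c : ℚ} {q w : ℚ⟦X⟧} {m n : ℕ}
    (hx : X = w - C c * w ^ (m + 1)) (hqw : X * q = w) (hq0 : constantCoeff q = 1) :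
    (C ((-1 : ℚ) ^ n * n !) + X ^ (n + 1) * D^[n] (D q * q⁻¹)) *
        (C ((m + 1 : ℕ) : ℚ) - (C ((m + 1 : ℕ) : ℚ) - 1) * q) ^ (2 * n + 1) =
      ∑ ℓ ∈ Finset.range (n + 1),
        C ((((Polynomial.logDerivPoly Polynomial.X n).coeff (n - ℓ)).eval
            ((m + 1 : ℕ) : ℤ) : ℤ) : ℚ) *
          (C ((m + 1 : ℕ) : ℚ) - (C ((m + 1 : ℕ) : ℚ) - 1) * q) ^ (n - ℓ) := by
  have hq := eq_one_add_of_X_mul_eq hx hqw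
  have hqr : q * q⁻¹ = 1 := PowerSeries.mul_inv_cancel q (by simp [hq0])
  have hP : (Polynomial.logDerivPoly Polynomial.X n).map
      ((Int.castRingHom ℚ).comp (Polynomial.evalRingHom ((m + 1 : ℕ) : ℤ))) =
        Polynomial.logDerivPoly (m + 1 : ℚ) n := by
    simp [Polynomial.map_logDerivPoly]
  rw [show C ((m + 1 : ℕ) : ℚ) - (C ((m + 1 : ℕ) : ℚ) - 1) * q = (m + 1 : ℚ⟦X⟧) - m * q by simp,
    show C ((-1 : ℚ) ^ n * n !) = ((-1) ^ n * n ! : ℚ⟦X⟧) by simp,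
    show D = ⇑(derivative ℚ) from rfl,
    (derivative ℚ).mul_pow_eq_aeval_logDerivPoly_of_eq_one_add derivative_X derivative_C hq hqr n,
    ← hP, Polynomial.aeval_map_eq_sum_range (Polynomial.natDegree_logDerivPoly_le _ n)]
  rfl

end PowerSeries

theorem stmt15 (k : ℕ) (hk : 1 ≤ k) :
    ∃ e : ℕ → Polynomial ℤ,
      (∀ ℓ, ℓ ≤ k - 1 → (e ℓ).natDegree ≤ k - 1) ∧
      e (k - 1) = Polynomial.C ((Nat.doubleFactorial (2 * k - 3) : ℤ)) * Polynomial.X ^ (k - 1) ∧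
      ∀ ν : ℕ, 2 ≤ ν → ∀ w q : PowerSeries ℚ,
        constantCoeff w = 0 →
        (X : ℚ⟦X⟧) = w - C (((2 * ν).factorial : ℚ) / (ν.factorial * (ν - 1).factorial)) * w ^ ν →
        constantCoeff q = 1 → X * q = w →
        (C ((-1 : ℚ) ^ (k - 1) * (k - 1).factorial) + X ^ k * D^[k - 1] (D q * q⁻¹)) *
            (C (ν : ℚ) - (C (ν : ℚ) - 1) * q) ^ (2 * k - 1) =
          ∑ ℓ ∈ Finset.range k,
            C ((-1 : ℚ) ^ (k - ℓ + 1) * (((e ℓ).eval (ν : ℤ) : ℤ) : ℚ)) *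
              (C (ν : ℚ) - (C (ν : ℚ) - 1) * q) ^ (k - 1 - ℓ) := by
  obtain ⟨n, rfl⟩ : ∃ n, k = n + 1 := ⟨k - 1, by omega⟩
  refine ⟨fun ℓ => Polynomial.C ((-1) ^ (n + 1 - ℓ + 1)) *
    (Polynomial.logDerivPoly Polynomial.X n).coeff (n - ℓ), fun ℓ _ => ?_, ?_, ?_⟩
  · exact (Polynomial.natDegree_C_mul_le _ _).trans
      (Polynomial.natDegree_coeff_logDerivPoly_X_le n _)
  · simp only [Nat.add_sub_cancel, Nat.sub_self]
    rw [show n + 1 - n + 1 = 2 by omega, Polynomial.coeff_zero_logDerivPoly,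
      show 2 * (n + 1) - 3 = 2 * n - 1 by omega]
    simp
  · intro ν hν w q _ hx hq0 hqw
    obtain ⟨m, rfl⟩ : ∃ m, ν = m + 1 := ⟨ν - 1, by omega⟩
    simp only [Nat.add_sub_cancel, show 2 * (n + 1) - 1 = 2 * n + 1 by omega]
    rw [iterate_logDeriv_mul_pow_eq_sum hx hqw hq0]
    refine Finset.sum_congr rfl fun ℓ _ => ?_
    congr 2
    rw [Polynomial.eval_mul, Polynomial.eval_C, Int.cast_mul, ← mul_assoc]
    push_cast
    rw [← mul_pow]
    norm_num
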